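/- arXiv:1906.01087 — 2 statements merged into one kernel-verified Lean document; each statement's English description precedes it below -/
import Mathlib

section
/- Let Q be a symmetric positive definite mn×mn matrix of the form Q = Ã + L where Ã is a diagonal {0,1} sampling matrix and L = α(I_n⊗L_r) + β(L_c⊗I_m). If vec(Y) = Ã·vec(X+N) and vec(X*) = Q^{-1}vec(Y), then ‖vec(X*) − vec(X)‖₂ ≤ ρ/λ_min(Q) + ‖vec(N)‖₂, where ρ = ‖L·vec(X+N)‖₂. -/
open Matrix
open scoped Kronecker

/-- The smallest eigenvalue of a real matrix, as the infimum of its (real) spectrum. -/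
noncomputable def lamMin {N : Type*} [Fintype N] [DecidableEq N] (M : Matrix N N ℝ) : ℝ :=
  sInf (spectrum ℝ M)

open scoped Pointwise

section Aux
variable {N : Type*} [Fintype N] [DecidableEq N]
set_option linter.unusedSectionVars false

/-- Euclidean-norm helper. -/
noncomputable def nrm (f : N → ℝ) : ℝ := Real.sqrt (∑ p, (f p) ^ 2)

lemma nrm_nonneg (f : N → ℝ) : 0 ≤ nrm f := Real.sqrt_nonneg _

lemma nrm_eq_norm (f : N → ℝ) : nrm f = ‖(WithLp.equiv 2 (N → ℝ)).symm f‖ := by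
  unfold nrm
  rw [EuclideanSpace.norm_eq]
  simp [Real.norm_eq_abs, sq_abs]

lemma nrm_add_le (f g : N → ℝ) : nrm (f + g) ≤ nrm f + nrm g := by
  simp only [nrm_eq_norm]
  simpa using norm_add_le ((WithLp.equiv 2 (N → ℝ)).symm f) ((WithLp.equiv 2 (N → ℝ)).symm g)

lemma sq_nrm (f : N → ℝ) : nrm f ^ 2 = ∑ p, (f p) ^ 2 :=
  Real.sq_sqrt (Finset.sum_nonneg fun i _ => sq_nonneg _)

lemma lamMin_quad {Q : Matrix N N ℝ} (hQ : Q.PosDef) (w : N → ℝ) :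
    lamMin Q * (∑ p, (w p) ^ 2) ≤ w ⬝ᵥ Q.mulVec w := by
  set lam := lamMin Q with hlam
  have hherm := hQ.isHermitian
  have hspec := hherm.spectrum_real_eq_range_eigenvalues
  have hM : (Q - lam • 1).IsHermitian := by
    refine hherm.sub ?_
    simp [Matrix.IsHermitian, Matrix.conjTranspose_smul]
  have hMspec : spectrum ℝ (Q - lam • 1) = spectrum ℝ Q - ({lam} : Set ℝ) := by
    rw [spectrum.sub_singleton_eq]
    congr 1
    simp [Algebra.algebraMap_eq_smul_one]
  have hbdd : BddBelow (spectrum ℝ Q) := (Matrix.finite_real_spectrum (𝕜 := ℝ) (A := Q)).bddBelow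
  have hEig : ∀ i, 0 ≤ hM.eigenvalues i := by
    intro i
    have hmem : hM.eigenvalues i ∈ spectrum ℝ (Q - lam • 1) :=
      hM.eigenvalues_mem_spectrum_real i
    rw [hMspec] at hmem
    obtain ⟨a, ha, b, hb, hab⟩ := hmem
    simp only [Set.mem_singleton_iff] at hb
    subst hb
    have hla : lam ≤ a := csInf_le hbdd ha
    have hab' : a - lam = hM.eigenvalues i := hab
    linarith
  have hPSD : (Q - lam • 1).PosSemidef := hM.posSemidef_iff_eigenvalues_nonneg.mpr hEig
  have h := hPSD.re_dotProduct_nonneg w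
  simp only [RCLike.re_to_real] at h
  have hexpand : star w ⬝ᵥ (Q - lam • 1).mulVec w
      = w ⬝ᵥ Q.mulVec w - lam * (∑ p, (w p) ^ 2) := by
    have hs : star w = w := by simp
    rw [hs, Matrix.sub_mulVec, dotProduct_sub, Matrix.smul_mulVec,
      Matrix.one_mulVec, dotProduct_smul]
    congr 1
    simp [dotProduct, sq, smul_eq_mul, Finset.mul_sum]
  rw [hexpand] at h
  linarith

lemma inv_mulVec_nrm_le {Q : Matrix N N ℝ} (hQ : Q.PosDef) (v : N → ℝ) :
    nrm (Q⁻¹.mulVec v) ≤ nrm v / lamMin Q := by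
  cases isEmpty_or_nonempty N with
  | inl hE =>
    simp [nrm]
  | inr hNE =>
    set lam := lamMin Q with hlam
    -- positivity of lam
    have hfin : (spectrum ℝ Q).Finite := Matrix.finite_real_spectrum (𝕜 := ℝ) (A := Q)
    have hne : (spectrum ℝ Q).Nonempty :=
      ⟨hQ.isHermitian.eigenvalues (Classical.arbitrary N),
        hQ.isHermitian.eigenvalues_mem_spectrum_real _⟩
    have hmem : lam ∈ spectrum ℝ Q := hne.csInf_mem hfin
    have hlampos : 0 < lam := by
      rw [hQ.isHermitian.spectrum_real_eq_range_eigenvalues] at hmem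
      obtain ⟨i, hi⟩ := hmem
      exact hi ▸ hQ.eigenvalues_pos i
    set w := Q⁻¹.mulVec v with hw
    have hQw : Q.mulVec w = v := by
      rw [hw, Matrix.mulVec_mulVec, Matrix.mul_nonsing_inv _ hQ.det_pos.ne'.isUnit, Matrix.one_mulVec]
    have hquad : lam * (∑ p, (w p) ^ 2) ≤ w ⬝ᵥ v := by
      simpa [hQw] using lamMin_quad hQ w
    have hCS : w ⬝ᵥ v ≤ nrm w * nrm v := by
      have h1 : (∑ i, w i * v i) ^ 2 ≤ (∑ i, (w i) ^ 2) * (∑ i, (v i) ^ 2) := by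
        simpa [sq] using Finset.sum_mul_sq_le_sq_mul_sq Finset.univ w v
      have h2 : (w ⬝ᵥ v : ℝ) ≤ Real.sqrt ((w ⬝ᵥ v) ^ 2) := by
        rw [Real.sqrt_sq_eq_abs]; exact le_abs_self _
      calc (w ⬝ᵥ v : ℝ) ≤ Real.sqrt ((w ⬝ᵥ v) ^ 2) := h2
        _ ≤ Real.sqrt ((∑ i, (w i) ^ 2) * (∑ i, (v i) ^ 2)) := by
            apply Real.sqrt_le_sqrt; simpa [dotProduct] using h1
        _ = nrm w * nrm v := by
            rw [Real.sqrt_mul (Finset.sum_nonneg fun i _ => sq_nonneg _)]; rfl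
    have hkey : lam * nrm w ^ 2 ≤ nrm w * nrm v := by
      rw [sq_nrm]; exact hquad.trans hCS
    rw [le_div_iff₀ hlampos]
    nlinarith [nrm_nonneg w, nrm_nonneg v, sq_nonneg (nrm w)]

end Aux

/-- **MSE upper bound (Lemma 1).** Let `Q = Ã + L` be symmetric positive definite, where
`Ã` is a diagonal `{0,1}` sampling matrix and `L = α(I_n ⊗ L_r) + β(L_c ⊗ I_m)`. If
`vec(Y) = Ã·vec(X+N)` and `vec(X*) = Q⁻¹ vec(Y)`, then
`‖vec(X*) − vec(X)‖₂ ≤ ρ/λ_min(Q) + ‖vec(N)‖₂` where `ρ = ‖L·vec(X+N)‖₂`. -/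
theorem mse_upper_bound {m n : ℕ}
    (Lr : Matrix (Fin m) (Fin m) ℝ) (Lc : Matrix (Fin n) (Fin n) ℝ) (α β : ℝ)
    (Atil : Matrix (Fin n × Fin m) (Fin n × Fin m) ℝ)
    (hAdiag : Atil.IsDiag) (hA01 : ∀ p, Atil p p = 0 ∨ Atil p p = 1)
    (hQ : (Atil + (α • ((1 : Matrix (Fin n) (Fin n) ℝ) ⊗ₖ Lr) +
      β • (Lc ⊗ₖ (1 : Matrix (Fin m) (Fin m) ℝ)))).PosDef)
    (x nv : Fin n × Fin m → ℝ) :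
    Real.sqrt (∑ p, ((Atil + (α • ((1 : Matrix (Fin n) (Fin n) ℝ) ⊗ₖ Lr) +
          β • (Lc ⊗ₖ (1 : Matrix (Fin m) (Fin m) ℝ))))⁻¹.mulVec
            (Atil.mulVec (x + nv)) p - x p) ^ 2) ≤
      Real.sqrt (∑ p, ((α • ((1 : Matrix (Fin n) (Fin n) ℝ) ⊗ₖ Lr) +
          β • (Lc ⊗ₖ (1 : Matrix (Fin m) (Fin m) ℝ))).mulVec (x + nv) p) ^ 2) /
        lamMin (Atil + (α • ((1 : Matrix (Fin n) (Fin n) ℝ) ⊗ₖ Lr) +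
          β • (Lc ⊗ₖ (1 : Matrix (Fin m) (Fin m) ℝ)))) +
      Real.sqrt (∑ p, (nv p) ^ 2) := by
  set L := α • ((1 : Matrix (Fin n) (Fin n) ℝ) ⊗ₖ Lr) +
      β • (Lc ⊗ₖ (1 : Matrix (Fin m) (Fin m) ℝ)) with hL
  set Q := Atil + L with hQdef
  have hdet : IsUnit Q.det := hQ.det_pos.ne'.isUnit
  set z := x + nv with hz
  set u := Q⁻¹.mulVec (L.mulVec z) with hu
  have hAtil : Atil = Q - L := by rw [hQdef]; abel
  have key : Q⁻¹.mulVec (Atil.mulVec z) - x = nv - u := by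
    rw [hAtil, Matrix.sub_mulVec, Matrix.mulVec_sub, Matrix.mulVec_mulVec,
      Matrix.nonsing_inv_mul _ hdet, Matrix.one_mulVec, ← hu]
    funext p
    simp [hz]
    ring
  have hLHS : Real.sqrt (∑ p, (Q⁻¹.mulVec (Atil.mulVec z) p - x p) ^ 2)
      = nrm (nv - u) := by
    rw [← key]; rfl
  rw [hLHS]
  have h1 : nrm (nv - u) ≤ nrm nv + nrm u := by
    have := nrm_add_le nv (-u)
    have hnu : nrm (-u) = nrm u := by simp [nrm]
    rw [hnu] at this
    simpa [sub_eq_add_neg] using this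
  have h2 : nrm u ≤ nrm (L.mulVec z) / lamMin Q := inv_mulVec_nrm_le hQ _
  have hfin : nrm (nv - u) ≤ nrm (L.mulVec z) / lamMin Q + nrm nv := by linarith
  exact hfin
end

section
/- Let L_r and L_c be combinatorial graph Laplacians of connected graphs on m and n vertices respectively, α, β > 0, and let Ã be a nonzero diagonal {0,1} matrix of size mn (i.e., at least one sample selected). Then Q = Ã + α(I_n⊗L_r) + β(L_c⊗I_m) is positive definite. -/
open Matrix
open scoped Kronecker

/-- `L` is the combinatorial graph Laplacian of the undirected weighted graph with
(nonnegative, symmetric, hollow) weight matrix `W`: `L = D - W` where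
`D = diag(row sums of W)`. -/
def IsGraphLaplacian {m : ℕ} (L W : Matrix (Fin m) (Fin m) ℝ) : Prop :=
  W.IsSymm ∧ (∀ i j, 0 ≤ W i j) ∧ (∀ i, W i i = 0) ∧
    L = Matrix.diagonal (fun i => ∑ j, W i j) - W

lemma lap_quad {m : ℕ} (L W : Matrix (Fin m) (Fin m) ℝ) (hW : W.IsSymm)
    (hL : L = Matrix.diagonal (fun i => ∑ j, W i j) - W) (x : Fin m → ℝ) :
    2 * (x ⬝ᵥ L.mulVec x) = ∑ i, ∑ j, W i j * (x i - x j) ^ 2 := by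
  subst hL
  have hsym : ∀ i j, W i j = W j i := fun i j => hW.apply j i
  have h1 : ∑ i, ∑ j, W i j * (x j) ^ 2 = ∑ i, ∑ j, W i j * (x i) ^ 2 := by
    rw [Finset.sum_comm]
    exact Finset.sum_congr rfl fun i _ => Finset.sum_congr rfl fun j _ => by rw [hsym j i]
  have key : x ⬝ᵥ (Matrix.diagonal (fun i => ∑ j, W i j) - W).mulVec x
      = ∑ i, ∑ j, (W i j * x i ^ 2 - W i j * (x i * x j)) := by
    simp only [dotProduct, mulVec, Matrix.sub_apply, Matrix.diagonal_apply, Finset.mul_sum]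
    refine Finset.sum_congr rfl fun i _ => ?_
    have : ∀ j : Fin m, x i * (((if i = j then ∑ k, W i k else 0) - W i j) * x j)
        = (if i = j then (∑ k, W i k) * (x i * x j) else 0) - W i j * (x i * x j) := by
      intro j; split <;> ring
    simp only [this, Finset.sum_sub_distrib, Finset.sum_ite_eq, Finset.mem_univ, if_true,
      Finset.sum_mul]
    congr 1
    exact Finset.sum_congr rfl fun j _ => by ring
  rw [key]
  have h3 : ∑ i, ∑ j, W i j * (x i - x j) ^ 2
      = ∑ i, ∑ j, (W i j * x i ^ 2 - 2 * (W i j * (x i * x j)) + W i j * x j ^ 2) :=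
    Finset.sum_congr rfl fun i _ => Finset.sum_congr rfl fun j _ => by ring
  rw [h3]
  have h2 : ∑ i : Fin m, ∑ j, 2 * (W i j * (x i * x j))
      = 2 * ∑ i : Fin m, ∑ j, W i j * (x i * x j) := by
    rw [Finset.mul_sum]
    exact Finset.sum_congr rfl fun i _ => (Finset.mul_sum _ _ _).symm
  simp only [Finset.sum_add_distrib, Finset.sum_sub_distrib, h1, h2]
  ring

lemma lap_quad_nonneg {m : ℕ} (L W : Matrix (Fin m) (Fin m) ℝ) (hW : W.IsSymm)
    (hWnn : ∀ i j, 0 ≤ W i j)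
    (hL : L = Matrix.diagonal (fun i => ∑ j, W i j) - W) (x : Fin m → ℝ) :
    0 ≤ x ⬝ᵥ L.mulVec x := by
  nlinarith [lap_quad L W hW hL x,
    Finset.sum_nonneg (fun i (_ : i ∈ Finset.univ) =>
      Finset.sum_nonneg (fun j (_ : j ∈ Finset.univ) =>
        mul_nonneg (hWnn i j) (sq_nonneg (x i - x j))))]

lemma lap_quad_zero {m : ℕ} (L W : Matrix (Fin m) (Fin m) ℝ) (hW : W.IsSymm)
    (hWnn : ∀ i j, 0 ≤ W i j)
    (hL : L = Matrix.diagonal (fun i => ∑ j, W i j) - W) (x : Fin m → ℝ)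
    (hq : x ⬝ᵥ L.mulVec x = 0) : L.mulVec x = 0 := by
  have hsum : ∑ i, ∑ j, W i j * (x i - x j) ^ 2 = 0 := by
    rw [← lap_quad L W hW hL x, hq]; ring
  have hterm : ∀ i j, W i j * (x i - x j) ^ 2 = 0 := by
    intro i j
    have h1 := Finset.sum_eq_zero_iff_of_nonneg (fun i (_ : i ∈ Finset.univ) =>
      Finset.sum_nonneg (fun j (_ : j ∈ Finset.univ) =>
        mul_nonneg (hWnn i j) (sq_nonneg (x i - x j)))) |>.mp hsum i (Finset.mem_univ i)
    exact Finset.sum_eq_zero_iff_of_nonneg (fun j (_ : j ∈ Finset.univ) =>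
      mul_nonneg (hWnn i j) (sq_nonneg (x i - x j))) |>.mp h1 j (Finset.mem_univ j)
  have hterm' : ∀ i j, W i j * (x i - x j) = 0 := by
    intro i j
    rcases mul_eq_zero.mp (hterm i j) with h | h
    · rw [h, zero_mul]
    · rw [pow_eq_zero_iff (by norm_num) |>.mp h, mul_zero]
  funext i
  subst hL
  simp only [mulVec, dotProduct, Matrix.sub_apply, Matrix.diagonal_apply, ite_mul, zero_mul,
    sub_mul, Finset.sum_sub_distrib, Finset.sum_ite_eq, Finset.mem_univ, if_true,
    Finset.sum_mul, Pi.zero_apply]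
  have : ∑ j, W i j * x i - ∑ j, W i j * x j = ∑ j, W i j * (x i - x j) := by
    rw [← Finset.sum_sub_distrib]
    exact Finset.sum_congr rfl fun j _ => by ring
  rw [this]
  exact Finset.sum_eq_zero fun j _ => hterm' i j

lemma kron_left_quad {m n : ℕ} (B : Matrix (Fin m) (Fin m) ℝ)
    (x : Fin n × Fin m → ℝ) :
    x ⬝ᵥ ((1 : Matrix (Fin n) (Fin n) ℝ) ⊗ₖ B).mulVec x
      = ∑ i : Fin n, (fun k => x (i, k)) ⬝ᵥ B.mulVec (fun k => x (i, k)) := by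
  simp only [dotProduct, mulVec, kroneckerMap_apply, Matrix.one_apply, Fintype.sum_prod_type,
    ite_mul, zero_mul, mul_ite, mul_zero]
  refine Finset.sum_congr rfl fun i _ => Finset.sum_congr rfl fun k _ => ?_
  congr 1
  rw [Finset.sum_comm]
  simp [Finset.sum_ite_eq, one_mul]

lemma kron_right_quad {m n : ℕ} (A : Matrix (Fin n) (Fin n) ℝ)
    (x : Fin n × Fin m → ℝ) :
    x ⬝ᵥ (A ⊗ₖ (1 : Matrix (Fin m) (Fin m) ℝ)).mulVec x
      = ∑ k : Fin m, (fun i => x (i, k)) ⬝ᵥ A.mulVec (fun i => x (i, k)) := by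
  simp only [dotProduct, mulVec, kroneckerMap_apply, Matrix.one_apply, Fintype.sum_prod_type,
    ite_mul, zero_mul, mul_ite, mul_zero]
  rw [Finset.sum_comm]
  refine Finset.sum_congr rfl fun k _ => Finset.sum_congr rfl fun i _ => ?_
  congr 1
  simp [Finset.sum_ite_eq, mul_ite, mul_zero]

/-- If `L_r`, `L_c` are combinatorial Laplacians of connected graphs (their kernels
consist exactly of constant vectors), `α, β > 0`, and `Ã` is a nonzero diagonal `{0,1}`
matrix of size `mn` (at least one sample selected), then
`Q = Ã + α(I_n ⊗ L_r) + β(L_c ⊗ I_m)` is positive definite. -/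
theorem coefficient_matrix_posDef_of_sample {m n : ℕ}
    (Lr Wr : Matrix (Fin m) (Fin m) ℝ) (Lc Wc : Matrix (Fin n) (Fin n) ℝ)
    (hLr : IsGraphLaplacian Lr Wr) (hLc : IsGraphLaplacian Lc Wc)
    (hconnr : ∀ x : Fin m → ℝ, Lr.mulVec x = 0 → ∃ c : ℝ, x = fun _ => c)
    (hconnc : ∀ x : Fin n → ℝ, Lc.mulVec x = 0 → ∃ c : ℝ, x = fun _ => c)
    (α β : ℝ) (hα : 0 < α) (hβ : 0 < β)
    (Atil : Matrix (Fin n × Fin m) (Fin n × Fin m) ℝ)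
    (hAdiag : Atil.IsDiag) (hA01 : ∀ p, Atil p p = 0 ∨ Atil p p = 1)
    (hnonzero : ∃ p, Atil p p = 1) :
    (Atil + α • ((1 : Matrix (Fin n) (Fin n) ℝ) ⊗ₖ Lr) +
      β • (Lc ⊗ₖ (1 : Matrix (Fin m) (Fin m) ℝ))).PosDef := by
  obtain ⟨hWrs, hWrnn, _, hLrdef⟩ := hLr
  obtain ⟨hWcs, hWcnn, _, hLcdef⟩ := hLc
  have hLrs : Lr.IsSymm := by
    rw [hLrdef]; unfold Matrix.IsSymm
    rw [Matrix.transpose_sub, Matrix.diagonal_transpose, hWrs]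
  have hLcs : Lc.IsSymm := by
    rw [hLcdef]; unfold Matrix.IsSymm
    rw [Matrix.transpose_sub, Matrix.diagonal_transpose, hWcs]
  refine Matrix.PosDef.of_dotProduct_mulVec_pos ?_ ?_
  · -- Hermitian
    show _ = _
    have : (Atil + α • ((1 : Matrix (Fin n) (Fin n) ℝ) ⊗ₖ Lr) +
        β • (Lc ⊗ₖ (1 : Matrix (Fin m) (Fin m) ℝ))).IsSymm := by
      unfold Matrix.IsSymm
      rw [Matrix.transpose_add, Matrix.transpose_add, Matrix.transpose_smul,
        Matrix.transpose_smul]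
      have h1 : ((1 : Matrix (Fin n) (Fin n) ℝ) ⊗ₖ Lr)ᵀ
          = (1 : Matrix (Fin n) (Fin n) ℝ)ᵀ ⊗ₖ Lrᵀ := rfl
      have h2 : (Lc ⊗ₖ (1 : Matrix (Fin m) (Fin m) ℝ))ᵀ
          = Lcᵀ ⊗ₖ (1 : Matrix (Fin m) (Fin m) ℝ)ᵀ := rfl
      rw [h1, h2, hLrs, hLcs, Matrix.transpose_one, Matrix.transpose_one, hAdiag.isSymm]
    exact this
  · intro x hx
    simp only [star_trivial]
    rw [Matrix.add_mulVec, Matrix.add_mulVec, Matrix.smul_mulVec,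
      Matrix.smul_mulVec, dotProduct_add, dotProduct_add, dotProduct_smul,
      dotProduct_smul, smul_eq_mul, smul_eq_mul]
    set qA := x ⬝ᵥ Atil.mulVec x with hqA
    have hAd : Atil.mulVec x = fun p => Atil p p * x p := by
      funext p
      conv_lhs => rw [← hAdiag.diagonal_diag]
      rw [Matrix.mulVec_diagonal]
      simp [Matrix.diag]
    have hqAval : qA = ∑ p, Atil p p * x p ^ 2 := by
      rw [hqA, hAd]
      simp only [dotProduct]
      exact Finset.sum_congr rfl fun p _ => by ring
    have hqAnn : 0 ≤ qA := by
      rw [hqAval]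
      refine Finset.sum_nonneg fun p _ => mul_nonneg ?_ (sq_nonneg _)
      rcases hA01 p with h | h <;> rw [h] <;> norm_num
    have hq1 := kron_left_quad (n := n) Lr x
    have hq2 := kron_right_quad (m := m) Lc x
    have hq1nn : 0 ≤ x ⬝ᵥ ((1 : Matrix (Fin n) (Fin n) ℝ) ⊗ₖ Lr).mulVec x := by
      rw [hq1]
      exact Finset.sum_nonneg fun i _ => lap_quad_nonneg Lr Wr hWrs hWrnn hLrdef _
    have hq2nn : 0 ≤ x ⬝ᵥ (Lc ⊗ₖ (1 : Matrix (Fin m) (Fin m) ℝ)).mulVec x := by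
      rw [hq2]
      exact Finset.sum_nonneg fun k _ => lap_quad_nonneg Lc Wc hWcs hWcnn hLcdef _
    rcases lt_or_eq_of_le hqAnn with hA | hA
    · nlinarith
    rcases lt_or_eq_of_le hq1nn with h1 | h1
    · nlinarith
    rcases lt_or_eq_of_le hq2nn with h2 | h2
    · nlinarith
    -- all three quadratic forms vanish; derive x = 0, contradiction
    exfalso
    apply hx
    -- row slices constant
    have hrow : ∀ i : Fin n, ∃ c : ℝ, (fun k => x (i, k)) = fun _ => c := by
      intro i
      apply hconnr
      apply lap_quad_zero Lr Wr hWrs hWrnn hLrdef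
      have hz : ∀ i : Fin n, (fun k => x (i, k)) ⬝ᵥ Lr.mulVec (fun k => x (i, k)) = 0 := by
        have := Finset.sum_eq_zero_iff_of_nonneg
          (fun i (_ : i ∈ Finset.univ) => lap_quad_nonneg Lr Wr hWrs hWrnn hLrdef
            (fun k => x (i, k))) |>.mp (by rw [← hq1, ← h1])
        exact fun i => this i (Finset.mem_univ i)
      exact hz i
    have hcol : ∀ k : Fin m, ∃ c : ℝ, (fun i => x (i, k)) = fun _ => c := by
      intro k
      apply hconnc
      apply lap_quad_zero Lc Wc hWcs hWcnn hLcdef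
      have hz : ∀ k : Fin m, (fun i => x (i, k)) ⬝ᵥ Lc.mulVec (fun i => x (i, k)) = 0 := by
        have := Finset.sum_eq_zero_iff_of_nonneg
          (fun k (_ : k ∈ Finset.univ) => lap_quad_nonneg Lc Wc hWcs hWcnn hLcdef
            (fun i => x (i, k))) |>.mp (by rw [← hq2, ← h2])
        exact fun k => this k (Finset.mem_univ k)
      exact hz k
    obtain ⟨p0, hp0⟩ := hnonzero
    have hxp0 : x p0 = 0 := by
      have hterm : Atil p0 p0 * x p0 ^ 2 = 0 := by
        refine Finset.sum_eq_zero_iff_of_nonneg (f := fun p => Atil p p * x p ^ 2) (fun p _ => mul_nonneg ?_ (sq_nonneg _))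
          |>.mp (by rw [← hqAval, ← hA]) p0 (Finset.mem_univ p0)
        rcases hA01 p with h | h <;> rw [h] <;> norm_num
      rw [hp0, one_mul] at hterm
      exact pow_eq_zero_iff (by norm_num) |>.mp hterm
    funext p
    obtain ⟨i, k⟩ := p
    obtain ⟨i0, k0⟩ := p0
    obtain ⟨c, hc⟩ := hrow i
    obtain ⟨d, hd⟩ := hcol k0
    have e1 : x (i, k) = c := congrFun hc k
    have e2 : x (i, k0) = c := congrFun hc k0
    have e3 : x (i, k0) = d := congrFun hd i
    have e4 : x (i0, k0) = d := congrFun hd i0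
    have : x (i, k) = 0 := by rw [e1, ← e2, e3, ← e4, hxp0]
    simpa using this
end
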